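/- arXiv:0907.0059 — 7 statements merged into one kernel-verified Lean document; each statement's English description precedes it below -/
import Mathlib

section
/- Let α, β, γ, δ be real numbers with αδ - βγ ≠ 0, and suppose the Möbius transformation m(ζ) = (αζ + β)/(γζ + δ) maps the imaginary axis (the set of purely imaginary complex numbers, together with ∞ in the obvious extended sense) into itself. Then αγ = 0 and βδ = 0; consequently either β = γ = 0 or α = δ = 0. -/
/-!
On the imaginary axis `ζ = t i` the real part of `m(ζ)` is `(βδ + αγ t²) / |γ t i + δ|²`, so the
hypothesis says that the quadratic polynomial `βδ + αγ t²` vanishes for every `t ≠ 0` (the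
denominator only vanishes when `γ = δ = 0`, which the determinant excludes). Evaluating at `t = 1`
and `t = 2` kills both coefficients, and `αδ ≠ βγ` then forces one of the two anti-diagonal
patterns.
-/

open Complex

lemma re_div_ofReal_mul_I (α β γ δ t : ℝ) :
    (((α : ℂ) * (t * I) + β) / ((γ : ℂ) * (t * I) + δ)).re =
      (β * δ + α * γ * t ^ 2) / normSq ((γ : ℂ) * (t * I) + δ) := by
  rw [div_re]
  simp only [add_re, add_im, mul_re, mul_im, ofReal_re, ofReal_im, I_re, I_im]
  ring

lemma ofReal_mul_mul_I_add_ne_zero {γ δ t : ℝ} (hγδ : γ ≠ 0 ∨ δ ≠ 0) (ht : t ≠ 0) :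
    (γ : ℂ) * (t * I) + δ ≠ 0 := by
  intro hw
  have hre : δ = 0 := by simpa using congrArg re hw
  have him : γ * t = 0 := by simpa using congrArg im hw
  exact hγδ.elim (fun hγ => mul_ne_zero hγ ht him) (· hre)

lemma mobius_coeffs_eq_zero {α β γ δ : ℝ} (hdet : α * δ - β * γ ≠ 0)
    (hαγ : α * γ = 0) (hβδ : β * δ = 0) : (β = 0 ∧ γ = 0) ∨ (α = 0 ∧ δ = 0) := by
  rcases mul_eq_zero.1 hαγ with hα | hγ <;> rcases mul_eq_zero.1 hβδ with hβ | hδ <;>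
    simp_all

/-- If a Möbius transformation with real coefficients and nonzero determinant maps the
imaginary axis into itself, then `αγ = 0` and `βδ = 0`; hence `β = γ = 0` or `α = δ = 0`. -/
theorem stmt1 (α β γ δ : ℝ) (hdet : α * δ - β * γ ≠ 0)
    (h : ∀ ζ : ℂ, ζ.re = 0 → (γ : ℂ) * ζ + (δ : ℂ) ≠ 0 →
      ((((α : ℂ) * ζ + (β : ℂ)) / ((γ : ℂ) * ζ + (δ : ℂ))).re = 0)) :
    α * γ = 0 ∧ β * δ = 0 ∧ ((β = 0 ∧ γ = 0) ∨ (α = 0 ∧ δ = 0)) := by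
  have hγδ : γ ≠ 0 ∨ δ ≠ 0 := by
    by_contra! h0
    exact hdet (by simp [h0])
  have hquad : ∀ t : ℝ, t ≠ 0 → β * δ + α * γ * t ^ 2 = 0 := by
    intro t ht
    have hw := ofReal_mul_mul_I_add_ne_zero hγδ ht
    have hre := h _ (by simp) hw
    rw [re_div_ofReal_mul_I] at hre
    exact (div_eq_zero_iff.1 hre).resolve_right (normSq_eq_zero.not.2 hw)
  have h1 := hquad 1 one_ne_zero
  have h2 := hquad 2 two_ne_zero
  have hαγ : α * γ = 0 := by linarith
  have hβδ : β * δ = 0 := by linarith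
  exact ⟨hαγ, hβδ, mobius_coeffs_eq_zero hdet hαγ hβδ⟩
end

section
/- Let 1 < t₁ < t₂ be real numbers. There is no Möbius transformation m(ζ) = (αζ + β)/(γζ + δ) with real coefficients α, β, γ, δ and αδ - βγ ≠ 0 that maps the four-point set σ_{t₁} = {i, -i, i√t₁, -i√t₁} onto the four-point set σ_{t₂} = {i, -i, i√t₂, -i√t₂}. -/
/-!
A real Möbius map `(αζ + β)/(γζ + δ)` sending `i u` to `i v` with `v ≠ 0` satisfies `β = -u v γ`
and `α u = v δ`. If it sends `i ↦ i v` and `i√t₁ ↦ i w`, this gives `(v - √t₁ w) γ = 0` and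
`(w - √t₁ v) δ = 0`; since `γ` and `δ` do not both vanish, `t₁` is the ratio of two of the numbers
`v², w² ∈ {1, t₂}`, which is impossible for `1 < t₁ < t₂`.
-/

open Complex

noncomputable def realMobius (α β γ δ : ℝ) (ζ : ℂ) : ℂ :=
  ((α : ℂ) * ζ + (β : ℂ)) / ((γ : ℂ) * ζ + (δ : ℂ))

/-- The set `σ_t = {i, -i, i√t, -i√t}`. -/
def imagQuad (t : ℝ) : Set ℂ :=
  {I, -I, I * (Real.sqrt t : ℂ), -(I * (Real.sqrt t : ℂ))}

lemma exists_eq_I_mul_of_mem_imagQuad {t : ℝ} (ht : 0 < t) {z : ℂ} (hz : z ∈ imagQuad t) :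
    ∃ v : ℝ, v ≠ 0 ∧ v ^ 2 ∈ ({1, t} : Set ℝ) ∧ z = I * v := by
  have hs : Real.sqrt t ≠ 0 := (Real.sqrt_pos.mpr ht).ne'
  have hsq : Real.sqrt t ^ 2 = t := Real.sq_sqrt ht.le
  simp only [imagQuad, Set.mem_insert_iff, Set.mem_singleton_iff] at hz
  rcases hz with rfl | rfl | rfl | rfl
  · exact ⟨1, one_ne_zero, by simp, by simp⟩
  · exact ⟨-1, by norm_num, by simp, by simp⟩
  · exact ⟨Real.sqrt t, hs, by simp [hsq], rfl⟩
  · exact ⟨-Real.sqrt t, neg_ne_zero.mpr hs, by simp [hsq], by push_cast; ring⟩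

lemma coeff_eq_of_realMobius_I_mul_eq {α β γ δ u v : ℝ} (hv : v ≠ 0)
    (h : realMobius α β γ δ (I * u) = I * v) : β = -(u * v * γ) ∧ α * u = v * δ := by
  have hden : (γ : ℂ) * (I * u) + δ ≠ 0 := by
    intro h0
    rw [realMobius, h0, div_zero] at h
    exact hv (by simpa using congrArg im h.symm)
  rw [realMobius, div_eq_iff hden] at h
  have hre := congrArg re h
  have him := congrArg im h
  simp only [add_re, add_im, mul_re, mul_im, ofReal_re, ofReal_im, I_re, I_im] at hre him
  constructor <;> linarith

lemma eq_mul_or_eq_mul_of_realMobius {α β γ δ s v w : ℝ} (hdet : α * δ - β * γ ≠ 0)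
    (hv : v ≠ 0) (hw : w ≠ 0) (h₁ : realMobius α β γ δ I = I * v)
    (h₂ : realMobius α β γ δ (I * s) = I * w) : v = s * w ∨ w = s * v := by
  obtain ⟨hβ₁, hα₁⟩ := coeff_eq_of_realMobius_I_mul_eq (u := 1) hv (by simpa using h₁)
  obtain ⟨hβ₂, hα₂⟩ := coeff_eq_of_realMobius_I_mul_eq hw h₂
  by_contra! hne
  have hγ : γ = 0 := by
    have : (v - s * w) * γ = 0 := by linear_combination hβ₁ - hβ₂
    exact (mul_eq_zero.mp this).resolve_left (sub_ne_zero.mpr hne.1)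
  have hδ : δ = 0 := by
    have : (w - s * v) * δ = 0 := by linear_combination s * hα₁ - hα₂
    exact (mul_eq_zero.mp this).resolve_left (sub_ne_zero.mpr hne.2)
  exact hdet (by simp [hγ, hδ])

lemma ne_mul_of_mem_pair {t₁ t₂ a b : ℝ} (h1 : 1 < t₁) (h12 : t₁ < t₂)
    (ha : a ∈ ({1, t₂} : Set ℝ)) (hb : b ∈ ({1, t₂} : Set ℝ)) : a ≠ t₁ * b := by
  simp only [Set.mem_insert_iff, Set.mem_singleton_iff] at ha hb
  rcases ha with rfl | rfl <;> rcases hb with rfl | rfl <;> nlinarith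

open Complex in
/-- For `1 < t₁ < t₂` no real Möbius transformation maps
`{i, -i, i√t₁, -i√t₁}` onto `{i, -i, i√t₂, -i√t₂}`. -/
theorem stmt2 (t₁ t₂ : ℝ) (h1 : 1 < t₁) (h12 : t₁ < t₂) :
    ¬ ∃ (α β γ δ : ℝ), α * δ - β * γ ≠ 0 ∧
      (fun ζ : ℂ => ((α : ℂ) * ζ + (β : ℂ)) / ((γ : ℂ) * ζ + (δ : ℂ))) ''
          ({I, -I, I * (Real.sqrt t₁ : ℂ), -(I * (Real.sqrt t₁ : ℂ))} : Set ℂ)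
        = ({I, -I, I * (Real.sqrt t₂ : ℂ), -(I * (Real.sqrt t₂ : ℂ))} : Set ℂ) := by
  rintro ⟨α, β, γ, δ, hdet, himg⟩
  change realMobius α β γ δ '' imagQuad t₁ = imagQuad t₂ at himg
  have ht₂ : 0 < t₂ := by linarith
  have hmaps {z : ℂ} (hz : z ∈ imagQuad t₁) : realMobius α β γ δ z ∈ imagQuad t₂ :=
    himg ▸ Set.mem_image_of_mem _ hz
  obtain ⟨v, hv, hv₂, hmv⟩ :=
    exists_eq_I_mul_of_mem_imagQuad ht₂ (hmaps (z := I) (by simp [imagQuad]))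
  obtain ⟨w, hw, hw₂, hmw⟩ :=
    exists_eq_I_mul_of_mem_imagQuad ht₂ (hmaps (z := I * Real.sqrt t₁) (by simp [imagQuad]))
  have hsq : Real.sqrt t₁ ^ 2 = t₁ := Real.sq_sqrt (by linarith)
  rcases eq_mul_or_eq_mul_of_realMobius hdet hv hw hmv hmw with h | h
  · exact ne_mul_of_mem_pair h1 h12 hv₂ hw₂ (by rw [h, mul_pow, hsq])
  · exact ne_mul_of_mem_pair h1 h12 hw₂ hv₂ (by rw [h, mul_pow, hsq])
end

section
/- Let 1 ≤ t₁ < t₂ be real numbers. Then the real quartic forms q_{t₁}(ξ,η) = (ξ² + η²)(ξ² + t₁η²) and q_{t₂}(ξ,η) = (ξ² + η²)(ξ² + t₂η²) are not linearly equivalent over ℝ; that is, there is no matrix C ∈ GL₂(ℝ) and no λ ∈ ℝ* with q_{t₂}(C(ξ,η)) = λ·q_{t₁}(ξ,η) for all (ξ,η) ∈ ℝ². In particular there is no C ∈ GL₂(ℝ) with q_{t₂}∘C = q_{t₁}. -/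
/-!
Pull `q_{t₂}` back along `C` as the product of the quadratic forms `Q₁ = u² + v²` and
`Q₂ = u² + t₂ v²`, where `(u, v) = C (ξ, η)`. Since `q_{t₁}` vanishes at `(i, 1)`, so does
`Q₁ Q₂`; the real and imaginary parts of this, together with the vanishing `ξ³η`-coefficient,
force the positive definite forms `Q₁`, `Q₂` to be diagonal. For diagonal forms `A ξ² + D η²`
and `A' ξ² + D' η²` the ratio `r = A D' / (A' D)` is then pinned down twice: comparing
coefficients with `l q_{t₁}` gives `r ∈ {t₁, 1/t₁}`, while `C` being diagonal or antidiagonal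
gives `r ∈ {t₂, 1/t₂}`. These sets are disjoint when `1 ≤ t₁ < t₂`.
-/

lemma binary_quartic_coeffs_eq_zero {K : Type*} [Field K] [CharZero K]
    {c₀ c₁ c₂ c₃ c₄ : K}
    (h : ∀ x y : K,
      c₀ * x ^ 4 + c₁ * x ^ 3 * y + c₂ * x ^ 2 * y ^ 2 + c₃ * x * y ^ 3 + c₄ * y ^ 4 = 0) :
    c₀ = 0 ∧ c₁ = 0 ∧ c₂ = 0 ∧ c₃ = 0 ∧ c₄ = 0 := by
  have h₁₀ := h 1 0
  have h₀₁ := h 0 1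
  have h₁₁ := h 1 1
  have h₁ₘ := h 1 (-1)
  have h₂₁ := h 2 1
  refine ⟨?_, ?_, ?_, ?_, ?_⟩
  · linear_combination h₁₀
  · linear_combination (h₂₁ - 12 * h₁₀ + 3 * h₀₁ - 3 * h₁₁ - h₁ₘ) / 6
  · linear_combination (h₁₁ + h₁ₘ) / 2 - h₁₀ - h₀₁
  · linear_combination
      (h₁₁ - h₁ₘ) / 2 - (h₂₁ - 12 * h₁₀ + 3 * h₀₁ - 3 * h₁₁ - h₁ₘ) / 6
  · linear_combination h₀₁

section QuadraticForms

variable {K : Type*} [Field K] {A B D A' B' D' l s : K}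

lemma coeffs_of_mul_eq [CharZero K]
    (h : ∀ x y : K,
      (A * x ^ 2 + 2 * B * x * y + D * y ^ 2) * (A' * x ^ 2 + 2 * B' * x * y + D' * y ^ 2) =
        l * ((x ^ 2 + y ^ 2) * (x ^ 2 + s * y ^ 2))) :
    A * A' = l ∧ A * B' + A' * B = 0 ∧ A * D' + A' * D + 4 * B * B' = l * (1 + s) ∧
      B * D' + B' * D = 0 ∧ D * D' = l * s := by
  obtain ⟨h₀, h₁, h₂, h₃, h₄⟩ := binary_quartic_coeffs_eq_zero (c₀ := A * A' - l)
    (c₁ := 2 * (A * B' + A' * B)) (c₂ := A * D' + A' * D + 4 * B * B' - l * (1 + s))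
    (c₃ := 2 * (B * D' + B' * D)) (c₄ := D * D' - l * s) (fun x y => by linear_combination h x y)
  refine ⟨?_, ?_, ?_, ?_, ?_⟩
  · linear_combination h₀
  · linear_combination h₁ / 2
  · linear_combination h₂
  · linear_combination h₃ / 2
  · linear_combination h₄

lemma off_diag_coeffs_eq_zero_of_mul_eq [LinearOrder K] [IsStrictOrderedRing K]
    (hA : 0 < A) (hA' : 0 < A')
    (h : ∀ x y : K,
      (A * x ^ 2 + 2 * B * x * y + D * y ^ 2) * (A' * x ^ 2 + 2 * B' * x * y + D' * y ^ 2) =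
        l * ((x ^ 2 + y ^ 2) * (x ^ 2 + s * y ^ 2))) :
    B = 0 ∧ B' = 0 := by
  obtain ⟨h₀, h₁, h₂, h₃, h₄⟩ := coeffs_of_mul_eq h
  -- `(D - A + 2 B i) (D' - A' + 2 B' i)` is the value of the product at `(i, 1)`, hence zero
  have hre : (D - A) * (D' - A') - 4 * B * B' = 0 := by linear_combination h₀ - h₂ + h₄
  have him : (D - A) * B' + (D' - A') * B = 0 := by linear_combination h₃ - h₁
  have hnorm : ((D - A) ^ 2 + 4 * B ^ 2) * ((D' - A') ^ 2 + 4 * B' ^ 2) = 0 := by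
    linear_combination ((D - A) * (D' - A') - 4 * B * B') * hre
      + 4 * ((D - A) * B' + (D' - A') * B) * him
  rcases mul_eq_zero.1 hnorm with hz | hz
  · have hB : B = 0 := by nlinarith [sq_nonneg (D - A), sq_nonneg B]
    subst hB
    exact ⟨rfl, (mul_eq_zero.1 (by linear_combination h₁)).resolve_left hA.ne'⟩
  · have hB' : B' = 0 := by nlinarith [sq_nonneg (D' - A'), sq_nonneg B']
    subst hB'
    exact ⟨(mul_eq_zero.1 (by linear_combination h₁)).resolve_left hA'.ne', rfl⟩

lemma coeff_ratio_of_mul_eq [CharZero K] (hB : B = 0)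
    (h : ∀ x y : K,
      (A * x ^ 2 + 2 * B * x * y + D * y ^ 2) * (A' * x ^ 2 + 2 * B' * x * y + D' * y ^ 2) =
        l * ((x ^ 2 + y ^ 2) * (x ^ 2 + s * y ^ 2))) :
    (A * D' - s * (A' * D)) * (s * (A * D') - A' * D) = 0 := by
  obtain ⟨h₀, -, h₂, -, h₄⟩ := coeffs_of_mul_eq h
  subst hB
  linear_combination
    s * (A * D' + A' * D + l * (1 + s)) * h₂ - (1 + s) ^ 2 * (D * D' * h₀ + l * h₄)

end QuadraticForms

lemma gram_ratio_of_diagonal {K : Type*} [Field K] {a b c d t : K} (ht : t ≠ 1)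
    (hB : a * b + c * d = 0) (hB' : a * b + t * (c * d) = 0) :
    ((a ^ 2 + c ^ 2) * (b ^ 2 + t * d ^ 2) - t * ((a ^ 2 + t * c ^ 2) * (b ^ 2 + d ^ 2))) *
      (t * ((a ^ 2 + c ^ 2) * (b ^ 2 + t * d ^ 2)) - (a ^ 2 + t * c ^ 2) * (b ^ 2 + d ^ 2)) =
      0 := by
  have hcd : c * d = 0 :=
    (mul_eq_zero.1 (by linear_combination hB' - hB : (t - 1) * (c * d) = 0)).resolve_left
      (sub_ne_zero.2 ht)
  have hab : a * b = 0 := by linear_combination hB - hcd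
  rcases mul_eq_zero.1 hab with rfl | rfl <;> rcases mul_eq_zero.1 hcd with rfl | rfl <;> ring

lemma eq_or_mul_eq_one_of_ratio {K : Type*} [Field K] {X Y s t : K} (hX : X ≠ 0) (hY : Y ≠ 0)
    (hs : (X - s * Y) * (s * X - Y) = 0) (ht : (X - t * Y) * (t * X - Y) = 0) :
    s = t ∨ s * t = 1 := by
  rcases mul_eq_zero.1 hs with hs | hs <;> rcases mul_eq_zero.1 ht with ht | ht
  · exact Or.inl (mul_right_cancel₀ hY (by linear_combination ht - hs))
  · exact Or.inr (mul_right_cancel₀ hY (by linear_combination ht - t * hs))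
  · exact Or.inr (mul_right_cancel₀ hY (by linear_combination hs - s * ht))
  · exact Or.inl (mul_right_cancel₀ hX (by linear_combination hs - ht))

lemma sq_add_mul_sq_pos {a c t : ℝ} (ht : 1 ≤ t) (hac : a ≠ 0 ∨ c ≠ 0) :
    0 < a ^ 2 + t * c ^ 2 := by
  rcases hac with ha | hc
  · have := sq_pos_of_ne_zero ha
    positivity
  · nlinarith [sq_pos_of_ne_zero hc, sq_nonneg a]

theorem false_of_quartic_pullback_eq_smul {a b c d l s t : ℝ} (hs : 1 ≤ s) (hst : s < t)
    (hdet : a * d - b * c ≠ 0)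
    (h : ∀ x y : ℝ, ((a * x + b * y) ^ 2 + (c * x + d * y) ^ 2) *
        ((a * x + b * y) ^ 2 + t * (c * x + d * y) ^ 2) =
          l * ((x ^ 2 + y ^ 2) * (x ^ 2 + s * y ^ 2))) :
    False := by
  have hac : a ≠ 0 ∨ c ≠ 0 := by
    by_contra! hac
    exact hdet (by rw [hac.1, hac.2]; ring)
  have hbd : b ≠ 0 ∨ d ≠ 0 := by
    by_contra! hbd
    exact hdet (by rw [hbd.1, hbd.2]; ring)
  have hA : 0 < a ^ 2 + c ^ 2 := by simpa using sq_add_mul_sq_pos (t := 1) le_rfl hac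
  have hD : 0 < b ^ 2 + d ^ 2 := by simpa using sq_add_mul_sq_pos (t := 1) le_rfl hbd
  have hA' := sq_add_mul_sq_pos (t := t) (by linarith) hac
  have hD' := sq_add_mul_sq_pos (t := t) (by linarith) hbd
  have hQ : ∀ x y : ℝ,
      ((a ^ 2 + c ^ 2) * x ^ 2 + 2 * (a * b + c * d) * x * y + (b ^ 2 + d ^ 2) * y ^ 2) *
        ((a ^ 2 + t * c ^ 2) * x ^ 2 + 2 * (a * b + t * (c * d)) * x * y +
          (b ^ 2 + t * d ^ 2) * y ^ 2) =
        l * ((x ^ 2 + y ^ 2) * (x ^ 2 + s * y ^ 2)) := fun x y => by linear_combination h x y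
  obtain ⟨hB, hB'⟩ := off_diag_coeffs_eq_zero_of_mul_eq hA hA' hQ
  rcases eq_or_mul_eq_one_of_ratio (by positivity) (by positivity) (coeff_ratio_of_mul_eq hB hQ)
      (gram_ratio_of_diagonal (by linarith) hB hB') with heq | hinv
  · linarith
  · nlinarith

/-- For `1 ≤ t₁ < t₂` the real binary quartics `q_{t₁}` and `q_{t₂}` are not linearly
equivalent over `ℝ`, even up to a nonzero real scalar. -/
theorem stmt3 (t₁ t₂ : ℝ) (h1 : 1 ≤ t₁) (h12 : t₁ < t₂) :
    ¬ ∃ (C : Matrix (Fin 2) (Fin 2) ℝ) (l : ℝ), IsUnit C.det ∧ l ≠ 0 ∧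
      ∀ ξ η : ℝ,
        ((C 0 0 * ξ + C 0 1 * η) ^ 2 + (C 1 0 * ξ + C 1 1 * η) ^ 2) *
            ((C 0 0 * ξ + C 0 1 * η) ^ 2 + t₂ * (C 1 0 * ξ + C 1 1 * η) ^ 2)
          = l * ((ξ ^ 2 + η ^ 2) * (ξ ^ 2 + t₁ * η ^ 2)) := by
  rintro ⟨C, l, hC, -, h⟩
  exact false_of_quartic_pullback_eq_smul h1 h12 (Matrix.det_fin_two C ▸ hC.ne_zero) h
end

section
/- For every real t, the polynomial map φ_t of ℂ⁷ defined by z₀* = i(z₀ - (1/2)(z₁z₆ + z₂z₅ + z₃z₄) - (1/4)(z₄³ + z₅³ + z₆³ + t·z₄z₅z₆)), z₁* = z₁ + (3/2)z₆² + (t/2)z₄z₅, z₂* = z₂ + (3/2)z₅² + (t/2)z₄z₆, z₃* = z₃ + (3/2)z₄² + (t/2)z₅z₆, z_j* = z_j for j = 4,5,6, maps the tube hypersurface S_t = {Z ∈ ℂ⁷ : Re z₀ = x₁x₆ + x₂x₅ + x₃x₄ + x₄³ + x₅³ + x₆³ + t·x₄x₅x₆ where x_j = Re z_j} onto the quadric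 Q'_{3,3} = {Z ∈ ℂ⁷ : Im z₀ = (1/2)Re(z₁·conj(z₆) + z₂·conj(z₅) + z₃·conj(z₄))}; i.e., Z ∈ S_t if and only if φ_t(Z) ∈ Q'_{3,3}. -/
/-!
Since `Im (i w) = Re w`, both conditions say that a real number vanishes, and the two numbers
`x₀ - (x₁x₆ + x₂x₅ + x₃x₄ + x₄³ + x₅³ + x₆³ + t x₄x₅x₆)` and `Re w - ½ Re (z₁* z̄₆ + z₂* z̄₅ + z₃* z̄₄)`
coincide. Substituting `Re z = (z + z̄)/2` makes this a polynomial identity in the `zⱼ, z̄ⱼ`; it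
rests on the polarization identities `Re (ab) + Re (a b̄) = 2 Re a Re b` and
`Re (abc) + Re (ab c̄) + Re (a b̄ c) + Re (ā bc) = 4 Re a Re b Re c`.
-/

open Complex in
/-- The polynomial automorphism `φ_t` of `ℂ⁷` maps the tube hypersurface `S_t` onto the
quadric `Q'_{3,3}`: `Z ∈ S_t ↔ φ_t(Z) ∈ Q'_{3,3}`. -/
theorem stmt6 (t : ℝ) (z0 z1 z2 z3 z4 z5 z6 : ℂ) :
    (z0.re = z1.re * z6.re + z2.re * z5.re + z3.re * z4.re
        + z4.re ^ 3 + z5.re ^ 3 + z6.re ^ 3 + t * z4.re * z5.re * z6.re) ↔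
    ((I * (z0 - (1 / 2) * (z1 * z6 + z2 * z5 + z3 * z4)
        - (1 / 4) * (z4 ^ 3 + z5 ^ 3 + z6 ^ 3 + (t : ℂ) * z4 * z5 * z6))).im
      = (1 / 2) * (((z1 + (3 / 2) * z6 ^ 2 + ((t : ℂ) / 2) * z4 * z5) * (starRingEnd ℂ) z6
          + (z2 + (3 / 2) * z5 ^ 2 + ((t : ℂ) / 2) * z4 * z6) * (starRingEnd ℂ) z5
          + (z3 + (3 / 2) * z4 ^ 2 + ((t : ℂ) / 2) * z5 * z6) * (starRingEnd ℂ) z4).re)) := by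
  rw [I_mul_im, ← sub_eq_zero, ← sub_eq_zero (a := re _)]
  convert Iff.rfl using 2
  apply ofReal_injective
  simp only [ofReal_sub, ofReal_add, ofReal_mul, ofReal_pow, ofReal_div, ofReal_one, ofReal_ofNat,
    re_eq_add_conj, map_add, map_sub, map_mul, map_pow, conj_conj, conj_ofReal, map_div₀,
    map_ofNat, map_one]
  ring
end

section
/- For every real t, the hypersurface B_t ⊂ ℝ⁷ given by x₀ = x₁x₆ + x₂x₅ + x₃x₄ + x₄³ + x₅³ + x₆³ + t·x₄x₅x₆ is affinely homogeneous: for every point q ∈ B_t there exists an affine transformation T of ℝ⁷ (T(X) = AX + a with A ∈ GL₇(ℝ)) such that T(B_t) = B_t and T maps the origin-point (the point of B_t with x₁ = … = x₆ = 0, x₀ = 0) to q. -/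
/-!
Write `B_t = {x | x₀ = F_t x}`. For `q ∈ ℝ⁷` there is a unipotent linear map `A_q`, fixing
`x₄, x₅, x₆`, such that `x₀ - F_t x` is additive along `x ↦ A_q x + q`:
`(A_q x + q)₀ - F_t (A_q x + q) = (x₀ - F_t x) + (q₀ - F_t q)`.
Hence for `q ∈ B_t` this affine map preserves `B_t`, and it sends `0` to `q`.
-/

theorem Equiv.image_eq_self_of_forall_mem_iff {α : Type*} (e : α ≃ α) {S : Set α}
    (h : ∀ x, e x ∈ S ↔ x ∈ S) : e '' S = S := by
  ext y
  rw [e.image_eq_preimage_symm, Set.mem_preimage, ← h, e.apply_symm_apply]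

namespace FelsKaupBase

def cubicForm (t : ℝ) (x : Fin 7 → ℝ) : ℝ :=
  x 1 * x 6 + x 2 * x 5 + x 3 * x 4 + (x 4) ^ 3 + (x 5) ^ 3 + (x 6) ^ 3 + t * x 4 * x 5 * x 6

/-- The rows of `x₁, x₂, x₃` make `F_t (A_q x + q) - F_t x - F_t q` linear in `x`; the row of `x₀`
adds exactly this linear form. -/
noncomputable def shear (t : ℝ) (q : Fin 7 → ℝ) : (Fin 7 → ℝ) ≃ₗ[ℝ] (Fin 7 → ℝ) where
  toFun x := ![x 0 + q 6 * x 1 + q 5 * x 2 + q 4 * x 3 + (q 3 + t * q 5 * q 6) * x 4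
      + q 2 * x 5 + (q 1 - t * q 4 * q 5) * x 6,
    x 1 - 3 * q 6 * x 6,
    x 2 - 3 * q 5 * x 5 - t * q 4 * x 6,
    x 3 - 3 * q 4 * x 4 - t * q 6 * x 5 - t * q 5 * x 6,
    x 4, x 5, x 6]
  invFun z := ![z 0 - q 6 * z 1 - q 5 * z 2 - q 4 * z 3 - (q 3 + 3 * q 4 ^ 2 + t * q 5 * q 6) * z 4
      - (q 2 + 3 * q 5 ^ 2 + t * q 4 * q 6) * z 5 - (q 1 + 3 * q 6 ^ 2 + t * q 4 * q 5) * z 6,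
    z 1 + 3 * q 6 * z 6,
    z 2 + 3 * q 5 * z 5 + t * q 4 * z 6,
    z 3 + 3 * q 4 * z 4 + t * q 6 * z 5 + t * q 5 * z 6,
    z 4, z 5, z 6]
  map_add' x y := by ext i; fin_cases i <;> simp <;> ring
  map_smul' r x := by ext i; fin_cases i <;> simp <;> ring
  left_inv x := by ext i; fin_cases i <;> simp <;> ring
  right_inv z := by ext i; fin_cases i <;> simp <;> ring

theorem defect_shear_add (t : ℝ) (q x : Fin 7 → ℝ) :
    (shear t q x + q) 0 - cubicForm t (shear t q x + q)
      = (x 0 - cubicForm t x) + (q 0 - cubicForm t q) := by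
  simp only [cubicForm, Pi.add_apply, shear, LinearEquiv.coe_mk, LinearMap.coe_mk, AddHom.coe_mk,
    Matrix.cons_val_zero, Matrix.cons_val_one, Matrix.cons_val]
  ring

theorem shear_add_mem_iff {t : ℝ} {q : Fin 7 → ℝ} (hq : q 0 = cubicForm t q) (x : Fin 7 → ℝ) :
    (shear t q x + q) 0 = cubicForm t (shear t q x + q) ↔ x 0 = cubicForm t x := by
  rw [← sub_eq_zero, defect_shear_add, hq, sub_self, add_zero, sub_eq_zero]

end FelsKaupBase

open FelsKaupBase in
/-- The base `B_t ⊂ ℝ⁷` of the Fels–Kaup hypersurface is affinely homogeneous: for every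
`q ∈ B_t` there is an affine transformation preserving `B_t` and sending the origin to `q`. -/
theorem stmt7 (t : ℝ) :
    ∀ q ∈ {x : Fin 7 → ℝ | x 0 = x 1 * x 6 + x 2 * x 5 + x 3 * x 4
        + (x 4) ^ 3 + (x 5) ^ 3 + (x 6) ^ 3 + t * x 4 * x 5 * x 6},
      ∃ (A : (Fin 7 → ℝ) ≃ₗ[ℝ] (Fin 7 → ℝ)) (a : Fin 7 → ℝ),
        (fun X => A X + a) '' {x : Fin 7 → ℝ | x 0 = x 1 * x 6 + x 2 * x 5 + x 3 * x 4
            + (x 4) ^ 3 + (x 5) ^ 3 + (x 6) ^ 3 + t * x 4 * x 5 * x 6}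
          = {x : Fin 7 → ℝ | x 0 = x 1 * x 6 + x 2 * x 5 + x 3 * x 4
            + (x 4) ^ 3 + (x 5) ^ 3 + (x 6) ^ 3 + t * x 4 * x 5 * x 6} ∧
        A 0 + a = q := by
  intro q hq
  refine ⟨shear t q, q, ?_, by simp⟩
  exact ((shear t q).toEquiv.trans (Equiv.addRight q)).image_eq_self_of_forall_mem_iff
    (shear_add_mem_iff hq)
end

section
/- Define j(t) = -t³(t³ - 216)³/(t³ + 27)³ for real or complex t with t³ ≠ -27. Then for all t with t ≠ 0, t³ ≠ -27, and t ≠ 6 (so that -18/t also satisfies the constraints, noting (-18/t)³ = -5832/t³ ≠ -27 iff t³ ≠ 216), one has j(t)·j(-18/t) = 1728²; i.e., the normalized invariants J(t) = j(t)/1728 satisfy J(t)·J(-18/t) = 1. -/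
/-!
Writing `s = t³`, the substitution `t ↦ -18/t` becomes `s ↦ -5832/s`, under which
`s - 216 ↦ -216 (s + 27)/s` and `s + 27 ↦ 27 (s - 216)/s`. The factors `(s - 216)³` and
`(s + 27)³` therefore cancel crosswise in `j(s) · j(-5832/s)`, leaving the constant
`5832 · 8³ = 1728²`.
-/

/-- The invariant `j` as a function of `s = t³`. -/
def cubicJ {K : Type*} [Field K] (s : K) : K :=
  -s * (s - 216) ^ 3 / (s + 27) ^ 3

theorem cubicJ_mul_cubicJ_neg_div {K : Type*} [Field K] [CharZero K] {s : K} (hs : s ≠ 0)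
    (hs27 : s + 27 ≠ 0) (hs216 : s - 216 ≠ 0) :
    cubicJ s * cubicJ (-5832 / s) = 1728 ^ 2 := by
  have hsub : -5832 / s - 216 = -216 * (s + 27) / s := by field_simp; ring
  have hadd : -5832 / s + 27 = 27 * (s - 216) / s := by field_simp; ring
  rw [cubicJ, cubicJ, hsub, hadd]
  field_simp
  ring

/-- With `j(t) = -t³(t³-216)³/(t³+27)³`, for real `t` with `t ≠ 0`, `t³ ≠ -27`, `t ≠ 6`,
one has `j(t)·j(-18/t) = 1728²`. -/
theorem stmt14 (t : ℝ) (ht0 : t ≠ 0) (ht27 : t ^ 3 ≠ -27) (ht6 : t ≠ 6) :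
    (-t ^ 3 * (t ^ 3 - 216) ^ 3 / (t ^ 3 + 27) ^ 3) *
      (-(-18 / t) ^ 3 * ((-18 / t) ^ 3 - 216) ^ 3 / ((-18 / t) ^ 3 + 27) ^ 3)
      = 1728 ^ 2 := by
  have hcube : (-18 / t) ^ 3 = -5832 / t ^ 3 := by rw [div_pow]; norm_num
  have h27 : t ^ 3 + 27 ≠ 0 := fun h => ht27 (eq_neg_of_add_eq_zero_left h)
  have h216 : t ^ 3 - 216 ≠ 0 := fun h =>
    ht6 ((Odd.pow_inj (by decide : Odd 3)).mp (by rw [sub_eq_zero.mp h]; norm_num))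
  change cubicJ (t ^ 3) * cubicJ ((-18 / t) ^ 3) = 1728 ^ 2
  rw [hcube]
  exact cubicJ_mul_cubicJ_neg_div (pow_ne_zero 3 ht0) h27 h216
end

section
/- Let 1 ≤ t₁ < t₂ ≤ 17 + 12√2 be real numbers, and suppose ψ is a linear equivalence between the bases of the hypersurfaces P_{t₁} and P_{t₂} of the special form x₀ ↦ λx₀, x ↦ Cx with λ ∈ ℝ*, C ∈ GL_n(ℝ), matching the graphs of the defining polynomials. Then comparing fourth-order homogeneous terms, the quartic forms λ⁻¹·(ξ²+η²)(ξ²+t₁η²) and (ξ'²+η'²)(ξ'²+t₂η'²)∘(linear map induced on the relevant 2-dimensional quotient) must coincide; in particular, linear non-equivalence over ℝ of the binary quartics q_{t₁} and q_{t₂} (up to nonzero scalar) implies no such ψ exists. Formally: if for all C ∈ GL₂(ℝ) and λ ∈ ℝ* we have q_{t₂}∘C ≠ λ·q_{t₁}, and the degree-4 parts of the defining polynomials of P_{t₁}, P_{t₂} are q_{t₁}(x_{k-1},x_{k+1}) and q_{t₂}(x_{k-1},x_{k+1}) respectively while all other terms have degree ≤ 3, then no map (x₀, x) ↦ (λx₀,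 Cx) with λ ∈ ℝ*, C ∈ GL_n(ℝ) sends the graph {x₀ = f_{t₁}(x)} onto the graph {x₀ = f_{t₂}(x)}. -/
/-!
Pulling the graph condition back along `(x₀, x) ↦ (l x₀, C x)` gives `l • f_{t₁} = f_{t₂} ∘ C`.
On each line `s ↦ s • v` of the coordinate plane of `x_a, x_b` both sides are polynomials in `s`;
since the remainders have degree at most `3`, their `s⁴`-coefficients give
`q_{t₂}(D v) = l · q_{t₁}(v)`, where `D` is the `{a, b}`-block of `C`. As `q_{t₁}` is positive
definite, `D v = 0` forces `v = 0`, so `D` is invertible, contradicting the hypothesis on the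
binary quartics.
-/

open Polynomial
open scoped Matrix

namespace MvPolynomial

variable {σ K : Type*} [CommRing K]

noncomputable def restrictLine (p : MvPolynomial σ K) (x : σ → K) : K[X] :=
  aeval (fun i => Polynomial.C (x i) * Polynomial.X) p

theorem eval_restrictLine (p : MvPolynomial σ K) (x : σ → K) (s : K) :
    (p.restrictLine x).eval s = eval (s • x) p := by
  induction p using MvPolynomial.induction_on with
  | C c => simp [restrictLine]
  | add p q hp hq => simp_all [restrictLine]
  | mul_X p i hp =>
    simp only [restrictLine, map_mul, aeval_X, Polynomial.eval_mul, Polynomial.eval_C,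
      Polynomial.eval_X, eval_X] at hp ⊢
    rw [hp, Pi.smul_apply, smul_eq_mul, mul_comm s]

theorem natDegree_restrictLine_le (p : MvPolynomial σ K) (x : σ → K) :
    (p.restrictLine x).natDegree ≤ p.totalDegree := by
  rw [restrictLine, aeval_def, eval₂_eq]
  refine natDegree_sum_le_of_forall_le _ _ fun d hd => ?_
  have hmonomial :
      algebraMap K K[X] (coeff d p) * ∏ i ∈ d.support, (Polynomial.C (x i) * Polynomial.X) ^ d i
        = Polynomial.C (coeff d p * ∏ i ∈ d.support, x i ^ d i)
          * Polynomial.X ^ ∑ i ∈ d.support, d i := by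
    simp only [mul_pow, Finset.prod_mul_distrib, Finset.prod_pow_eq_pow_sum, Polynomial.C_mul,
      Polynomial.algebraMap_eq, ← Polynomial.C_pow, map_prod, mul_assoc]
  rw [hmonomial]
  exact (natDegree_C_mul_X_pow_le _ _).trans (le_totalDegree hd)

theorem eq_of_forall_mul_pow_add_eval_smul [IsDomain K] [Infinite K] {k : ℕ}
    {p q : MvPolynomial σ K} {x y : σ → K} {A B : K}
    (hp : p.totalDegree < k) (hq : q.totalDegree < k)
    (h : ∀ s : K, A * s ^ k + eval (s • x) p = B * s ^ k + eval (s • y) q) : A = B := by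
  have hpoly : Polynomial.C A * Polynomial.X ^ k + p.restrictLine x
      = Polynomial.C B * Polynomial.X ^ k + q.restrictLine y :=
    Polynomial.funext fun s => by simpa [eval_restrictLine] using h s
  simpa [Polynomial.coeff_eq_zero_of_natDegree_lt ((natDegree_restrictLine_le _ _).trans_lt hp),
    Polynomial.coeff_eq_zero_of_natDegree_lt ((natDegree_restrictLine_le _ _).trans_lt hq)]
    using congrArg (Polynomial.coeff · k) hpoly

end MvPolynomial

theorem Matrix.mulVec_extend_comp {m n K : Type*} [Fintype m] [Fintype n]
    [NonUnitalNonAssocSemiring K]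
    {ι : m → n} (hι : ι.Injective) (C : Matrix n n K) (v : m → K) :
    (C *ᵥ Function.extend ι v 0) ∘ ι = C.submatrix ι ι *ᵥ v := by
  ext i
  refine (Fintype.sum_of_injective ι hι _ _ (fun j hj => ?_) fun k => ?_).symm
  · simp [Function.extend_apply' _ _ _ hj]
  · simp [hι.extend_apply]

theorem Matrix.det_ne_zero_of_comp_mulVec_eq_mul {m K : Type*} [Fintype m] [DecidableEq m]
    [Field K]
    {Q₁ Q₂ : (m → K) → K} (h₁ : ∀ v, v ≠ 0 → Q₁ v ≠ 0) (h₂ : Q₂ 0 = 0) {l : K} (hl : l ≠ 0)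
    {D : Matrix m m K} (h : ∀ v, Q₂ (D *ᵥ v) = l * Q₁ v) : D.det ≠ 0 := by
  intro hdet
  obtain ⟨v, hv, hDv⟩ := Matrix.exists_mulVec_eq_zero_iff.mpr hdet
  have := h v
  rw [hDv, h₂, eq_comm] at this
  exact mul_ne_zero hl (h₁ v hv) this

section BinaryQuartic

variable {K : Type*}

def binaryQuartic [CommRing K] (t : K) (v : Fin 2 → K) : K :=
  (v 0 ^ 2 + v 1 ^ 2) * (v 0 ^ 2 + t * v 1 ^ 2)

theorem binaryQuartic_smul [CommRing K] (t s : K) (v : Fin 2 → K) :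
    binaryQuartic t (s • v) = s ^ 4 * binaryQuartic t v := by
  simp only [binaryQuartic, Pi.smul_apply, smul_eq_mul]
  ring

theorem binaryQuartic_pos [Field K] [LinearOrder K] [IsStrictOrderedRing K] {t : K} (ht : 0 < t)
    {v : Fin 2 → K} (hv : v ≠ 0) : 0 < binaryQuartic t v := by
  have hv' : v 0 ≠ 0 ∨ v 1 ≠ 0 := by
    by_contra! h
    exact hv (funext fun i => by fin_cases i <;> simp [h.1, h.2])
  rcases hv' with h | h <;> unfold binaryQuartic <;> positivity

end BinaryQuartic

theorem stmt19_general (t₁ t₂ : ℝ) (h1 : 1 ≤ t₁)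
    (n : ℕ) (a b : Fin n) (hab : a ≠ b)
    (R₁ R₂ : MvPolynomial (Fin n) ℝ)
    (hR₁ : R₁.totalDegree ≤ 3) (hR₂ : R₂.totalDegree ≤ 3)
    (hq : ∀ (C : Matrix (Fin 2) (Fin 2) ℝ) (l : ℝ), IsUnit C.det → l ≠ 0 →
      ¬ ∀ ξ η : ℝ,
        ((C 0 0 * ξ + C 0 1 * η) ^ 2 + (C 1 0 * ξ + C 1 1 * η) ^ 2) *
            ((C 0 0 * ξ + C 0 1 * η) ^ 2 + t₂ * (C 1 0 * ξ + C 1 1 * η) ^ 2)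
          = l * ((ξ ^ 2 + η ^ 2) * (ξ ^ 2 + t₁ * η ^ 2))) :
    ¬ ∃ (l : ℝ) (C : Matrix (Fin n) (Fin n) ℝ), l ≠ 0 ∧ IsUnit C.det ∧
      (fun X : ℝ × (Fin n → ℝ) => (l * X.1, C.mulVec X.2)) ''
          {X : ℝ × (Fin n → ℝ) | X.1 =
            ((X.2 a) ^ 2 + (X.2 b) ^ 2) * ((X.2 a) ^ 2 + t₁ * (X.2 b) ^ 2)
              + MvPolynomial.eval X.2 R₁}
        = {X : ℝ × (Fin n → ℝ) | X.1 =
            ((X.2 a) ^ 2 + (X.2 b) ^ 2) * ((X.2 a) ^ 2 + t₂ * (X.2 b) ^ 2)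
              + MvPolynomial.eval X.2 R₂} := by
  rintro ⟨l, C, hl, -, hset⟩
  set ι : Fin 2 → Fin n := ![a, b]
  have hι : ι.Injective := by
    intro i j
    fin_cases i <;> fin_cases j <;> simp [ι, hab, hab.symm]
  have hgraph : ∀ x : Fin n → ℝ, l * (binaryQuartic t₁ (x ∘ ι) + MvPolynomial.eval x R₁)
      = binaryQuartic t₂ ((C *ᵥ x) ∘ ι) + MvPolynomial.eval (C *ᵥ x) R₂ :=
    fun x =>
      hset.subset ⟨(binaryQuartic t₁ (x ∘ ι) + MvPolynomial.eval x R₁, x), rfl, rfl⟩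
  have hquartic : ∀ v, binaryQuartic t₂ (C.submatrix ι ι *ᵥ v) = l * binaryQuartic t₁ v := by
    intro v
    refine (MvPolynomial.eq_of_forall_mul_pow_add_eval_smul (k := 4) (p := l • R₁) (q := R₂)
      (x := Function.extend ι v 0) (y := C *ᵥ Function.extend ι v 0)
      ((MvPolynomial.totalDegree_smul_le _ _).trans_lt (by omega)) (by omega) fun s => ?_).symm
    have := hgraph (s • Function.extend ι v 0)
    rw [Matrix.mulVec_smul, Pi.smul_comp, Pi.smul_comp, Function.extend_comp hι,
      Matrix.mulVec_extend_comp hι, binaryQuartic_smul, binaryQuartic_smul] at this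
    rw [MvPolynomial.smul_eval]
    linear_combination this
  have hdet := Matrix.det_ne_zero_of_comp_mulVec_eq_mul
    (fun v hv => (binaryQuartic_pos (by linarith) hv).ne') (by simp [binaryQuartic]) hl hquartic
  exact hq _ l hdet.isUnit hl fun ξ η => by
    simpa [binaryQuartic, Matrix.mulVec, dotProduct, Fin.sum_univ_two, ι] using hquartic ![ξ, η]

/-- If the binary quartics `q_{t₁}` and `q_{t₂}` are not linearly equivalent over `ℝ` up to
a nonzero scalar, and `f₁, f₂ : ℝⁿ → ℝ` have degree-4 parts `q_{t₁}(x_a, x_b)` and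
`q_{t₂}(x_a, x_b)` with all remaining terms of degree `≤ 3`, then no map
`(x₀, x) ↦ (λx₀, Cx)` with `λ ∈ ℝ*`, `C ∈ GLₙ(ℝ)` sends the graph of `f₁` onto the graph
of `f₂`. -/
theorem stmt19 (t₁ t₂ : ℝ) (h1 : 1 ≤ t₁) (h12 : t₁ < t₂)
    (h2 : t₂ ≤ 17 + 12 * Real.sqrt 2)
    (n : ℕ) (a b : Fin n) (hab : a ≠ b)
    (R₁ R₂ : MvPolynomial (Fin n) ℝ)
    (hR₁ : R₁.totalDegree ≤ 3) (hR₂ : R₂.totalDegree ≤ 3)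
    (hq : ∀ (C : Matrix (Fin 2) (Fin 2) ℝ) (l : ℝ), IsUnit C.det → l ≠ 0 →
      ¬ ∀ ξ η : ℝ,
        ((C 0 0 * ξ + C 0 1 * η) ^ 2 + (C 1 0 * ξ + C 1 1 * η) ^ 2) *
            ((C 0 0 * ξ + C 0 1 * η) ^ 2 + t₂ * (C 1 0 * ξ + C 1 1 * η) ^ 2)
          = l * ((ξ ^ 2 + η ^ 2) * (ξ ^ 2 + t₁ * η ^ 2))) :
    ¬ ∃ (l : ℝ) (C : Matrix (Fin n) (Fin n) ℝ), l ≠ 0 ∧ IsUnit C.det ∧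
      (fun X : ℝ × (Fin n → ℝ) => (l * X.1, C.mulVec X.2)) ''
          {X : ℝ × (Fin n → ℝ) | X.1 =
            ((X.2 a) ^ 2 + (X.2 b) ^ 2) * ((X.2 a) ^ 2 + t₁ * (X.2 b) ^ 2)
              + MvPolynomial.eval X.2 R₁}
        = {X : ℝ × (Fin n → ℝ) | X.1 =
            ((X.2 a) ^ 2 + (X.2 b) ^ 2) * ((X.2 a) ^ 2 + t₂ * (X.2 b) ^ 2)
              + MvPolynomial.eval X.2 R₂} :=
  stmt19_general t₁ t₂ h1 n a b hab R₁ R₂ hR₁ hR₂ hq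
end
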